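/- Let (g, J) be the complex nilpotent Lie algebra with (1,0)-forms ω¹,...,ω⁴ satisfying dω¹ = 0, dω² = ω¹∧ω̄¹, dω³ = ω²∧ω̄¹, dω⁴ = ω³∧ω̄¹. Let α = ω̄¹∧ω̄⁴ + ω̄²∧ω̄³. Then there exists an invariant (1,1)-form β with ∂α + ∂̄β = 0, but there exists no invariant (2,0)-form γ with ∂β + ∂̄γ = 0 for any such β; hence α represents a class in E₂^{0,2} that does not survive to E₃^{0,2}, and the Frölicher spectral sequence does not degenerate at the second page. -/
import Mathlib


/-
STATEMENT 15: For the complex nilpotent Lie algebra with (1,0)-forms ω¹,…,ω⁴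
satisfying dω¹ = 0, dω² = ω¹∧ω̄¹, dω³ = ω²∧ω̄¹, dω⁴ = ω³∧ω̄¹, and α = ω̄¹∧ω̄⁴ + ω̄²∧ω̄³:
there exists an invariant (1,1)-form β with ∂α + ∂̄β = 0, but for any such β there is
no invariant (2,0)-form γ with ∂β + ∂̄γ = 0. Hence α gives a class in E₂^{0,2} not
surviving to E₃^{0,2} and the Frölicher spectral sequence does not degenerate at the
second page.

Model: exterior algebra over ℂ on generators gen 0..3 = ω¹..ω⁴, gen 4..7 = ω̄¹..ω̄⁴;
d determined by the structure equations (and conjugates) and the Leibniz rule.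
On invariant forms of this algebra, bidegree bookkeeping gives:
∂α = dα for the (0,2)-form α (since dω̄ⁱ has bidegree (1,1));
for a (1,1)-monomial ωⁱ∧ω̄ʲ: ∂̄(ωⁱ∧ω̄ʲ) = dωⁱ ∧ ω̄ʲ and ∂(ωⁱ∧ω̄ʲ) = -ωⁱ ∧ dω̄ʲ;
for a (2,0)-monomial ωⁱ∧ωʲ: ∂̄(ωⁱ∧ωʲ) = d(ωⁱ∧ωʲ) (all of d lands in (2,1)).
-/

noncomputable section

abbrev E := ExteriorAlgebra ℂ (Fin 8 → ℂ)

def gen (i : Fin 8) : E := ExteriorAlgebra.ι ℂ (Pi.single i 1)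

def hol (i : Fin 4) : E := gen ⟨i.1, by have := i.2; omega⟩
def ahol (i : Fin 4) : E := gen ⟨i.1 + 4, by have := i.2; omega⟩

def dgen : Fin 8 → E :=
  ![0, gen 0 * gen 4, gen 1 * gen 4, gen 2 * gen 4,
    0, gen 4 * gen 0, gen 5 * gen 0, gen 6 * gen 0]

def dhol (i : Fin 4) : E := dgen ⟨i.1, by have := i.2; omega⟩
def dahol (i : Fin 4) : E := dgen ⟨i.1 + 4, by have := i.2; omega⟩

def d2 (i j : Fin 8) : E := dgen i * gen j - gen i * dgen j

/-- ∂α for α = ω̄¹∧ω̄⁴ + ω̄²∧ω̄³ (equal to dα, which has pure bidegree (1,2)). -/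
def pdAlpha : E := d2 4 7 + d2 5 6

/-- ∂̄ of the (1,1)-monomial ωⁱ∧ω̄ʲ. -/
def pdbar11 (i j : Fin 4) : E := dhol i * ahol j

/-- ∂ of the (1,1)-monomial ωⁱ∧ω̄ʲ. -/
def pd11 (i j : Fin 4) : E := -(hol i * dahol j)

/-- ∂̄ of the (2,0)-monomial ωⁱ∧ωʲ (equal to its full differential). -/
def pdbar20 (i j : Fin 4) : E := dhol i * hol j - hol i * dhol j

/- ## Auxiliary machinery -/

/-- Alternating-map family whose only nonzero component is in degree 3:
the determinant of the `s`-selected coordinates. -/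
def falt (s : Fin 3 → Fin 8) : ∀ i, (Fin 8 → ℂ) [⋀^Fin i]→ₗ[ℂ] ℂ
  | 3 => (Matrix.detRowAlternating : (Fin 3 → ℂ) [⋀^Fin 3]→ₗ[ℂ] ℂ).compLinearMap
        (LinearMap.funLeft ℂ ℂ s)
  | _ => 0

/-- The linear functional on `E` extracting the coefficient of the degree-3
monomial determined by coordinates `s`. -/
def L (s : Fin 3 → Fin 8) : E →ₗ[ℂ] ℂ := ExteriorAlgebra.liftAlternating (falt s)

lemma triple (a b c : Fin 8) :
    gen a * gen b * gen c =
      ExteriorAlgebra.ιMulti ℂ 3 ![Pi.single a 1, Pi.single b 1, Pi.single c 1] := by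
  simp [ExteriorAlgebra.ιMulti_apply, List.ofFn_succ, gen, mul_assoc]

lemma L_triple (s : Fin 3 → Fin 8) (a b c : Fin 8) :
    L s (gen a * gen b * gen c) =
      Matrix.det (Matrix.of fun k l =>
        (![(Pi.single a 1 : Fin 8 → ℂ), Pi.single b 1, Pi.single c 1] k) (s l)) := by
  rw [triple, L, ExteriorAlgebra.liftAlternating_apply_ιMulti]
  rfl

lemma gen_swap (i j : Fin 8) : gen i * gen j = -(gen j * gen i) :=
  eq_neg_of_add_eq_zero_left (ExteriorAlgebra.ι_add_mul_swap _ _)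

lemma gen_sq (i : Fin 8) : gen i * gen i = 0 := ExteriorAlgebra.ι_sq_zero _

lemma dhol0 : dhol 0 = 0 := rfl
lemma dhol1 : dhol 1 = gen 0 * gen 4 := rfl
lemma dhol2 : dhol 2 = gen 1 * gen 4 := rfl
lemma dhol3 : dhol 3 = gen 2 * gen 4 := rfl
lemma dahol0 : dahol 0 = 0 := rfl
lemma dahol1 : dahol 1 = gen 4 * gen 0 := rfl
lemma dahol2 : dahol 2 = gen 5 * gen 0 := rfl
lemma dahol3 : dahol 3 = gen 6 * gen 0 := rfl
lemma ahol0 : ahol 0 = gen 4 := rfl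
lemma ahol1 : ahol 1 = gen 5 := rfl
lemma ahol2 : ahol 2 = gen 6 := rfl
lemma ahol3 : ahol 3 = gen 7 := rfl
lemma hol0 : hol 0 = gen 0 := rfl
lemma hol1 : hol 1 = gen 1 := rfl
lemma hol2 : hol 2 = gen 2 := rfl
lemma hol3 : hol 3 = gen 3 := rfl
lemma dgen4 : dgen 4 = 0 := rfl
lemma dgen5 : dgen 5 = gen 4 * gen 0 := rfl
lemma dgen6 : dgen 6 = gen 5 * gen 0 := rfl
lemma dgen7 : dgen 7 = gen 6 * gen 0 := rfl

lemma pdAlpha_eq : pdAlpha = -(2 : ℂ) • (gen 0 * gen 4 * gen 6) := by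
  rw [pdAlpha, d2, d2, dgen4, dgen5, dgen6, dgen7]
  rw [show gen 4 * (gen 6 * gen 0) = gen 0 * gen 4 * gen 6 by
    rw [gen_swap 6 0, mul_neg, ← mul_assoc, gen_swap 4 0, neg_mul, neg_neg]]
  rw [show gen 4 * gen 0 * gen 6 = -(gen 0 * gen 4 * gen 6) by
    rw [gen_swap 4 0, neg_mul]]
  rw [show gen 5 * (gen 5 * gen 0) = 0 by rw [← mul_assoc, gen_sq, zero_mul]]
  simp only [zero_mul, mul_zero]
  module

set_option maxHeartbeats 2000000 in
theorem stmt15 :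
    (∃ b : Fin 4 → Fin 4 → ℂ,
        pdAlpha + ∑ i, ∑ j, b i j • pdbar11 i j = 0) ∧
    (∀ b : Fin 4 → Fin 4 → ℂ,
        pdAlpha + ∑ i, ∑ j, b i j • pdbar11 i j = 0 →
        ¬ ∃ c : Fin 4 → Fin 4 → ℂ,
            (∑ i, ∑ j, b i j • pd11 i j) + (∑ i, ∑ j, c i j • pdbar20 i j) = 0) := by
  constructor
  · refine ⟨fun i j => if i = 1 ∧ j = 2 then 2 else 0, ?_⟩
    simp (config := { decide := true }) only [Fin.sum_univ_four, if_true, if_false,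
      zero_smul, add_zero, zero_add]
    rw [pdAlpha_eq, pdbar11, dhol1, ahol2]
    module
  · intro b heq
    have h1 := congrArg (L ![0, 4, 6]) heq
    simp only [Fin.sum_univ_four, pdAlpha_eq, pdbar11,
      dhol0, dhol1, dhol2, dhol3, ahol0, ahol1, ahol2, ahol3,
      zero_mul, smul_zero, map_add, map_sub, map_smul, map_zero, L_triple, smul_eq_mul] at h1
    simp (config := { decide := true }) [Matrix.det_fin_three, Pi.single_apply,
      Matrix.vecHead, Matrix.vecTail] at h1
    have hb : b 1 2 = 2 := by linear_combination h1
    rintro ⟨c, heq2⟩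
    have h2 := congrArg (L ![0, 1, 5]) heq2
    simp only [Fin.sum_univ_four, pd11, pdbar20,
      hol0, hol1, hol2, hol3, dhol0, dhol1, dhol2, dhol3,
      dahol0, dahol1, dahol2, dahol3, zero_mul, mul_zero, smul_zero, neg_zero,
      ← mul_assoc, map_add, map_sub, map_smul, map_neg, map_zero, L_triple, smul_eq_mul] at h2
    simp (config := { decide := true }) [Matrix.det_fin_three, Pi.single_apply,
      Matrix.vecHead, Matrix.vecTail] at h2
    rw [hb] at h2
    norm_num at h2


end
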